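/- Trilinear discrete sum bound for admissible envelopes: For every A ≥ 1 there exists a constant C = C(A) such that the following holds. Let c : ℤ → [0,∞) be square-summable and satisfy the maximal property (Mc)_k ≤ A·c_k for all k ∈ ℤ. Then for every k₁ ∈ ℤ, Σ_{(k₂,k₃,k₄) ∈ ℤ³} ⟨δk^hi⟩^{-1} ⟨δk^med⟩^{-1} c_{k₂} c_{k₃} c_{k₄} ≤ C · ‖c‖²_{ℓ²(ℤ)} · c_{k₁}, where for each quadruple (k₁,k₂,k₃,k₄) one sets δk^hi = max{|k₁−k₂|+|k₃−k₄|, |k₁−k₄|+|k₃−k₂|} and δk^med = min{|k₁−k₂|+|k₃−k₄|, |k₁−k₄|+|k₃−k₂|}. -/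

import Mathlib

noncomputable section

/-- `δk^hi = max{|k₁−k₂|+|k₃−k₄|, |k₁−k₄|+|k₃−k₂|}` for integer frequencies. -/
def δhiZ (k1 k2 k3 k4 : ℤ) : ℝ :=
  max ((|k1 - k2| + |k3 - k4| : ℤ) : ℝ) ((|k1 - k4| + |k3 - k2| : ℤ) : ℝ)

/-- `δk^med = min{|k₁−k₂|+|k₃−k₄|, |k₁−k₄|+|k₃−k₂|}` for integer frequencies. -/
def δmedZ (k1 k2 k3 k4 : ℤ) : ℝ :=
  min ((|k1 - k2| + |k3 - k4| : ℤ) : ℝ) ((|k1 - k4| + |k3 - k2| : ℤ) : ℝ)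

/-!
Write `x, y, z` for `k₂, k₃, k₄` and `k` for `k₁`. Since `(1 + max a b) (1 + min a b) =
(1 + a) (1 + b)`, the weight is `((1 + |k - x| + |y - z|) (1 + |k - z| + |y - x|))⁻¹`, which is
symmetric under `x ↔ z`; up to a factor `2` we may therefore assume `|x - k| ≤ |z - k|`. Then the
second factor is at least `(1 + |y - k| + |z - k|) / 2` and the first at least
`√(1 + |x - k|) √(1 + |y - z|)`. By Abel summation, the maximal property at `k` bounds
`∑_{|x - k| ≤ |z - k|} c x / √(1 + |x - k|)` by `4 A c k √(1 + |z - k|)`. What remains is the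
bilinear form of the kernel `√(1 + |z - k|) / (√(1 + |y - z|) (1 + |y - k| + |z - k|))`, which is
bounded on `ℓ²(ℤ)` by Schur's test with the weight `(1 + |· - k|)^(-1/2)`.
-/

open Finset

theorem inv_sqrt_one_add_le {x : ℝ} (hx : 0 ≤ x) : (√(1 + x))⁻¹ ≤ 2 * (√(1 + x) - √x) := by
  have h1 : 0 < √(1 + x) := Real.sqrt_pos.2 (by linarith)
  have h2 : √(1 + x) ^ 2 = 1 + x := Real.sq_sqrt (by linarith)
  have h3 : √x ^ 2 = x := Real.sq_sqrt hx
  rw [inv_le_iff_one_le_mul₀ h1]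
  nlinarith [sq_nonneg (√(1 + x) - √x), Real.sqrt_nonneg x]

/-- The discrete analogue of `∫ dt / (√(1 + t) (R + t)) ≲ R^(-1/2)`, as a telescoping bound. -/
theorem inv_sqrt_one_add_mul_inv_le {R x : ℝ} (hR : 1 ≤ R) (hx : 0 ≤ x) :
    (√(1 + x))⁻¹ * (R + x)⁻¹ ≤ 48 * ((√R + √(1 + x))⁻¹ - (√R + √(2 + x))⁻¹) := by
  set ρ := √R
  set s := √(1 + x)
  set t := √(2 + x)
  have hρ : ρ ^ 2 = R := Real.sq_sqrt (by linarith)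
  have hs : s ^ 2 = 1 + x := Real.sq_sqrt (by linarith)
  have ht : t ^ 2 = 2 + x := Real.sq_sqrt (by linarith)
  have hρ1 : 1 ≤ ρ := Real.one_le_sqrt.2 hR
  have hs1 : 1 ≤ s := Real.one_le_sqrt.2 (by linarith)
  have hst : s ≤ t := Real.sqrt_le_sqrt (by linarith)
  have hts : t ≤ 2 * s := by nlinarith
  have key : (ρ + s) * (ρ + t) * (s + t) ≤ 48 * (s * (R + x)) := by
    nlinarith [mul_le_mul_of_nonneg_left hts (by positivity : (0 : ℝ) ≤ (ρ + s) * (ρ + t)),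
      sq_nonneg (ρ - s)]
  have hdiff : ρ + t - (ρ + s) = (s + t)⁻¹ := eq_inv_of_mul_eq_one_left (by nlinarith)
  rw [inv_sub_inv (by positivity) (by positivity), hdiff, ← mul_inv]
  calc (s * (R + x))⁻¹ ≤ ((ρ + s) * (ρ + t) * (s + t) / 48)⁻¹ :=
        inv_anti₀ (by positivity) (by linarith)
    _ = 48 * ((s + t)⁻¹ / ((ρ + s) * (ρ + t))) := by field_simp

theorem Int.dist_sub_natCast_self (k : ℤ) (n : ℕ) : dist (k - n) k = n := by
  rw [Int.dist_eq]
  push_cast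
  rw [sub_sub_cancel_left, abs_neg, Nat.abs_cast]

theorem Int.dist_add_natCast_self (k : ℤ) (n : ℕ) : dist (k + n) k = n := by
  rw [Int.dist_eq]
  push_cast
  rw [add_sub_cancel_left, Nat.abs_cast]

theorem Int.mem_Icc_natAbs_iff_dist_le (k x z : ℤ) :
    x ∈ Icc (k - (z - k).natAbs) (k + (z - k).natAbs) ↔ dist x k ≤ dist z k := by
  rw [Int.dist_eq', Int.dist_eq', Int.cast_le, Int.abs_eq_natAbs, Int.abs_eq_natAbs, mem_Icc]
  omega

theorem Finset.sum_Icc_sub_add_succ {M : Type*} [AddCommMonoid M] (f : ℤ → M) (k : ℤ) (N : ℕ) :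
    ∑ l ∈ Icc (k - (N + 1 : ℕ)) (k + (N + 1 : ℕ)), f l
      = ∑ l ∈ Icc (k - N) (k + N), f l + (f (k - (N + 1 : ℕ)) + f (k + (N + 1 : ℕ))) := by
  have hl : k - ((N + 1 : ℕ) : ℤ) = k - N - 1 := by push_cast; ring
  have hr : k + ((N + 1 : ℕ) : ℤ) = k + N + 1 := by push_cast; ring
  rw [hl, hr, ← insert_Icc_right_eq_Icc_add_one (by omega),
    ← insert_Icc_left_eq_Icc_sub_one (by omega), sum_insert (by simp; omega),
    sum_insert (by simp)]
  abel

theorem Finset.sum_Icc_comp_dist_le (g : ℝ → ℝ) (hg : ∀ n : ℕ, 0 ≤ g n) (k : ℤ) (N : ℕ) :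
    ∑ l ∈ Icc (k - N) (k + N), g (dist l k) ≤ 2 * ∑ n ∈ range (N + 1), g n := by
  induction N with
  | zero => simpa [two_mul] using hg 0
  | succ N ih =>
    rw [sum_Icc_sub_add_succ, sum_range_succ, Int.dist_sub_natCast_self,
      Int.dist_add_natCast_self]
    linarith

/-- Abel summation: on `[0, N]` an antitone weight is a nonnegative combination of indicators of
`[0, n]`, `n ≤ N`, so a bound on the averages of `c` over centred windows transfers to it. -/
theorem Finset.sum_Icc_antitoneOn_mul_le {c : ℤ → ℝ} {k : ℤ} {m : ℝ}
    (hc : ∀ j : ℕ, ∑ l ∈ Icc (k - j) (k + j), c l ≤ (2 * j + 1) * m)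
    {w : ℝ → ℝ} (hw : AntitoneOn w (Set.Ici 0)) {N : ℕ} (hwN : 0 ≤ w N) :
    ∑ l ∈ Icc (k - N) (k + N), w (dist l k) * c l
      ≤ m * ∑ l ∈ Icc (k - N) (k + N), w (dist l k) := by
  induction N generalizing w with
  | zero => simpa [mul_comm] using mul_le_mul_of_nonneg_left (hc 0) hwN
  | succ N ih =>
    have hinner := ih (w := fun r => w r - w (N + 1 : ℕ))
      (fun a ha b hb hab => sub_le_sub_right (hw ha hb hab) _)
      (sub_nonneg.2 (hw (by simp) (by simp; positivity) (by simp)))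
    have hwindow := mul_le_mul_of_nonneg_left (hc (N + 1)) hwN
    simp only [sub_mul, sum_sub_distrib, ← mul_sum, mul_sub, sum_const, Int.card_Icc,
      nsmul_eq_mul] at hinner
    rw [show k + N + 1 - (k - N) = ((2 * N + 1 : ℕ) : ℤ) by push_cast; ring,
      Int.toNat_natCast] at hinner
    rw [sum_Icc_sub_add_succ] at hwindow
    rw [sum_Icc_sub_add_succ, sum_Icc_sub_add_succ, Int.dist_sub_natCast_self,
      Int.dist_add_natCast_self]
    push_cast at hwindow hinner ⊢
    linarith

theorem ENNReal.tsum_ofReal_le_of_sum_Icc_le {f : ℤ → ℝ} (hf : ∀ l, 0 ≤ f l) (k : ℤ) {B : ℝ}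
    (h : ∀ N : ℕ, ∑ l ∈ Icc (k - N) (k + N), f l ≤ B) :
    ∑' l, ENNReal.ofReal (f l) ≤ ENNReal.ofReal B := by
  rw [ENNReal.tsum_eq_iSup_sum' (fun N : ℕ => Icc (k - N) (k + N)) fun t => ?_]
  · refine iSup_le fun N => ?_
    rw [← ENNReal.ofReal_sum_of_nonneg fun l _ => hf l]
    exact ENNReal.ofReal_le_ofReal (h N)
  · refine ⟨∑ l ∈ t, (l - k).natAbs, fun l hl => ?_⟩
    have := single_le_sum (f := fun l => (l - k).natAbs) (fun _ _ => Nat.zero_le _) hl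
    simp only [mem_Icc]
    omega

theorem sum_Icc_inv_sqrt_le (k : ℤ) (N : ℕ) :
    ∑ l ∈ Icc (k - N) (k + N), (√(1 + dist l k))⁻¹ ≤ 4 * √(1 + N) := by
  have htel : ∑ n ∈ range (N + 1), (√(1 + (n : ℝ)))⁻¹ ≤ 2 * √(1 + N) :=
    calc ∑ n ∈ range (N + 1), (√(1 + (n : ℝ)))⁻¹
        ≤ ∑ n ∈ range (N + 1), (2 * √((n + 1 : ℕ) : ℝ) - 2 * √(n : ℝ)) := by
          gcongr with n
          push_cast
          rw [add_comm (n : ℝ) 1]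
          linarith [inv_sqrt_one_add_le n.cast_nonneg]
      _ = 2 * √(1 + N) := by
          rw [sum_range_sub (fun n : ℕ => 2 * √(n : ℝ))]
          push_cast
          rw [add_comm (N : ℝ), Real.sqrt_zero, mul_zero, sub_zero]
  linarith [sum_Icc_comp_dist_le (fun r => (√(1 + r))⁻¹) (fun n => by positivity) k N]

theorem tsum_ofReal_inv_sqrt_mul_inv_le (a : ℤ) {R : ℝ} (hR : 1 ≤ R) :
    ∑' u, ENNReal.ofReal ((√(1 + dist u a))⁻¹ * (R + dist u a)⁻¹)
      ≤ ENNReal.ofReal (96 * (√R)⁻¹) := by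
  have hpos : ∀ r : ℝ, 0 ≤ r → 0 ≤ (√(1 + r))⁻¹ * (R + r)⁻¹ := fun r hr =>
    mul_nonneg (by positivity) (inv_nonneg.2 (by linarith))
  refine ENNReal.tsum_ofReal_le_of_sum_Icc_le (fun u => hpos _ dist_nonneg) a fun N => ?_
  set τ : ℕ → ℝ := fun n => 48 * (√R + √(1 + n))⁻¹
  have hτ0 : τ 0 ≤ 48 * (√R)⁻¹ := by
    have : 0 < √R := Real.sqrt_pos.2 (by linarith)
    simp only [τ, Nat.cast_zero, add_zero, Real.sqrt_one]
    gcongr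
    linarith
  calc ∑ u ∈ Icc (a - N) (a + N), (√(1 + dist u a))⁻¹ * (R + dist u a)⁻¹
      ≤ 2 * ∑ n ∈ range (N + 1), (√(1 + (n : ℝ)))⁻¹ * (R + n)⁻¹ :=
        sum_Icc_comp_dist_le (fun r => (√(1 + r))⁻¹ * (R + r)⁻¹)
          (fun n => hpos n n.cast_nonneg) a N
    _ ≤ 2 * ∑ n ∈ range (N + 1), (τ n - τ (n + 1)) := by
        gcongr with n
        simp only [τ, Nat.cast_add, Nat.cast_one, ← mul_sub]
        rw [show (1 : ℝ) + (n + 1) = 2 + n by ring]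
        exact inv_sqrt_one_add_mul_inv_le hR n.cast_nonneg
    _ ≤ 96 * (√R)⁻¹ := by
        rw [sum_range_sub']
        have : 0 ≤ τ (N + 1) := by positivity
        linarith

section Schur

variable {ι : Type*} {K : ι → ι → ℝ} {h c : ι → ℝ}

theorem tsum_tsum_ofReal_mul_sq_div_le (hh : ∀ i, 0 < h i) {C : ℝ}
    (hrow : ∀ i, ∑' j, ENNReal.ofReal (K i j * h j) ≤ ENNReal.ofReal (C * h i)) :
    ∑' i, ∑' j, ENNReal.ofReal (K i j * h j * (c i ^ 2 / h i))
      ≤ ENNReal.ofReal C * ∑' i, ENNReal.ofReal (c i ^ 2) := by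
  rw [← ENNReal.tsum_mul_left]
  refine ENNReal.tsum_le_tsum fun i => ?_
  have hci : 0 ≤ c i ^ 2 / h i := div_nonneg (sq_nonneg _) (hh i).le
  calc ∑' j, ENNReal.ofReal (K i j * h j * (c i ^ 2 / h i))
      = (∑' j, ENNReal.ofReal (K i j * h j)) * ENNReal.ofReal (c i ^ 2 / h i) := by
        simp_rw [← ENNReal.tsum_mul_right, ENNReal.ofReal_mul' hci]
    _ ≤ ENNReal.ofReal (C * h i) * ENNReal.ofReal (c i ^ 2 / h i) := by gcongr; exact hrow i
    _ = ENNReal.ofReal C * ENNReal.ofReal (c i ^ 2) := by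
        rw [← ENNReal.ofReal_mul' hci, ← ENNReal.ofReal_mul' (sq_nonneg _)]
        congr 1
        field_simp [(hh i).ne']

theorem tsum_tsum_ofReal_mul_le_of_schur (hK : ∀ i j, 0 ≤ K i j) (hh : ∀ i, 0 < h i)
    (hc : ∀ i, 0 ≤ c i) {C₁ C₂ : ℝ}
    (hrow : ∀ i, ∑' j, ENNReal.ofReal (K i j * h j) ≤ ENNReal.ofReal (C₁ * h i))
    (hcol : ∀ j, ∑' i, ENNReal.ofReal (K i j * h i) ≤ ENNReal.ofReal (C₂ * h j)) :
    ∑' i, ∑' j, ENNReal.ofReal (K i j * c i * c j)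
      ≤ (ENNReal.ofReal C₁ + ENNReal.ofReal C₂) * ∑' i, ENNReal.ofReal (c i ^ 2) := by
  have hamgm : ∀ i j, K i j * c i * c j
      ≤ K i j * h j * (c i ^ 2 / h i) + K i j * h i * (c j ^ 2 / h j) := fun i j => by
    have hi := hh i
    have hj := hh j
    have hcc : c i * c j ≤ h j * (c i ^ 2 / h i) + h i * (c j ^ 2 / h j) := by
      rw [mul_div_assoc', mul_div_assoc', div_add_div _ _ hi.ne' hj.ne',
        le_div_iff₀ (by positivity)]
      nlinarith [sq_nonneg (h j * c i - h i * c j),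
        mul_nonneg (mul_nonneg hi.le hj.le) (mul_nonneg (hc i) (hc j))]
    nlinarith [mul_le_mul_of_nonneg_left hcc (hK i j)]
  calc ∑' i, ∑' j, ENNReal.ofReal (K i j * c i * c j)
      ≤ ∑' i, ∑' j, (ENNReal.ofReal (K i j * h j * (c i ^ 2 / h i))
          + ENNReal.ofReal (K i j * h i * (c j ^ 2 / h j))) :=
        ENNReal.tsum_le_tsum fun i => ENNReal.tsum_le_tsum fun j =>
          (ENNReal.ofReal_le_ofReal (hamgm i j)).trans ENNReal.ofReal_add_le
    _ = ∑' i, ∑' j, ENNReal.ofReal (K i j * h j * (c i ^ 2 / h i))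
          + ∑' j, ∑' i, ENNReal.ofReal (K i j * h i * (c j ^ 2 / h j)) := by
        simp_rw [ENNReal.tsum_add]
        rw [ENNReal.tsum_comm (f := fun i j => ENNReal.ofReal (K i j * h i * (c j ^ 2 / h j)))]
    _ ≤ _ := by
        rw [add_mul]
        exact add_le_add (tsum_tsum_ofReal_mul_sq_div_le hh hrow)
          (tsum_tsum_ofReal_mul_sq_div_le (K := fun j i => K i j) hh hcol)

end Schur

theorem summable_and_tsum_le_of_tsum_ofReal_le {ι : Type*} {f : ι → ℝ} {B : ℝ}
    (hf : ∀ i, 0 ≤ f i) (hB : 0 ≤ B) (h : ∑' i, ENNReal.ofReal (f i) ≤ ENNReal.ofReal B) :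
    Summable f ∧ ∑' i, f i ≤ B := by
  have hsum : ∀ u : Finset ι, ∑ i ∈ u, f i ≤ B := fun u => by
    rw [← ENNReal.ofReal_le_ofReal_iff hB, ENNReal.ofReal_sum_of_nonneg fun i _ => hf i]
    exact (ENNReal.sum_le_tsum u).trans h
  exact ⟨summable_of_sum_le hf hsum, Real.tsum_le_of_sum_le hf hsum⟩

theorem inv_one_add_abs_δhiZ_mul_δmedZ (k x y z : ℤ) :
    (1 + |δhiZ k x y z|)⁻¹ * (1 + |δmedZ k x y z|)⁻¹
      = ((1 + dist k x + dist y z) * (1 + dist k z + dist y x))⁻¹ := by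
  simp only [δhiZ, δmedZ, Int.cast_add, ← Int.dist_eq']
  have ha : 0 ≤ dist k x + dist y z := by positivity
  have hb : 0 ≤ dist k z + dist y x := by positivity
  rw [abs_of_nonneg (le_max_of_le_left ha), abs_of_nonneg (le_min ha hb), ← mul_inv,
    ← max_add_add_left, ← min_add_add_left, max_mul_min, add_assoc, add_assoc]

theorem trilinear_weight_le {k x y z : ℤ} (hxz : dist x k ≤ dist z k) :
    ((1 + dist k x + dist y z) * (1 + dist k z + dist y x))⁻¹
      ≤ 2 * (√(1 + dist x k))⁻¹ * ((√(1 + dist y z))⁻¹ * (1 + dist y k + dist z k)⁻¹) := by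
  have hP : √(1 + dist x k) * √(1 + dist y z) ≤ 1 + dist k x + dist y z := by
    rw [← Real.sqrt_mul (by positivity), Real.sqrt_le_left (by positivity), dist_comm k x]
    nlinarith [dist_nonneg (x := x) (y := k), dist_nonneg (x := y) (y := z)]
  have hQ : 1 + dist y k + dist z k ≤ 2 * (1 + dist k z + dist y x) := by
    linarith [dist_triangle y x k, dist_comm k z, dist_nonneg (x := y) (y := x)]
  calc ((1 + dist k x + dist y z) * (1 + dist k z + dist y x))⁻¹
      ≤ ((√(1 + dist x k) * √(1 + dist y z)) * ((1 + dist y k + dist z k) / 2))⁻¹ :=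
        inv_anti₀ (by positivity) (mul_le_mul hP (by linarith) (by positivity) (by positivity))
    _ = 2 * (√(1 + dist x k))⁻¹ * ((√(1 + dist y z))⁻¹ * (1 + dist y k + dist z k)⁻¹) := by
        field_simp

/-- What is left of the weight once `x` has been summed out against `c`. -/
def averagedKernel (k y z : ℤ) : ℝ :=
  √(1 + dist z k) * ((√(1 + dist y z))⁻¹ * (1 + dist y k + dist z k)⁻¹)

theorem tsum_ofReal_ite_trilinear_le {c : ℤ → ℝ} (hc : ∀ l, 0 ≤ c l) {k : ℤ} {m : ℝ}
    (hm : 0 ≤ m) (hmax : ∀ j : ℕ, ∑ l ∈ Icc (k - j) (k + j), c l ≤ (2 * j + 1) * m) (y z : ℤ) :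
    ∑' x, ENNReal.ofReal (if dist x k ≤ dist z k then
        ((1 + dist k x + dist y z) * (1 + dist k z + dist y x))⁻¹ * c x * c y * c z else 0)
      ≤ ENNReal.ofReal (8 * m * (averagedKernel k y z * c y * c z)) := by
  set N := (z - k).natAbs
  have hN : dist z k = N := by rw [Int.dist_eq', Nat.cast_natAbs, Int.cast_abs]
  have hmem := fun x => Int.mem_Icc_natAbs_iff_dist_le k x z
  set L := (√(1 + dist y z))⁻¹ * (1 + dist y k + dist z k)⁻¹ * c y * c z
  have hL : 0 ≤ L := mul_nonneg (mul_nonneg (by positivity) (hc y)) (hc z)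
  have hw : AntitoneOn (fun r : ℝ => (√(1 + r))⁻¹) (Set.Ici 0) := fun a ha b _ hab =>
    inv_anti₀ (Real.sqrt_pos.2 (by simp at ha; linarith)) (Real.sqrt_le_sqrt (by linarith))
  rw [tsum_eq_sum (s := Icc (k - N) (k + N)) fun x hx => by
      rw [if_neg (mt (hmem x).2 hx), ENNReal.ofReal_zero],
    ← ENNReal.ofReal_sum_of_nonneg fun x _ => by
      split_ifs
      · exact mul_nonneg (mul_nonneg (mul_nonneg (by positivity) (hc x)) (hc y)) (hc z)
      · exact le_rfl]
  refine ENNReal.ofReal_le_ofReal ?_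
  calc ∑ x ∈ Icc (k - N) (k + N), (if dist x k ≤ dist z k then
        ((1 + dist k x + dist y z) * (1 + dist k z + dist y x))⁻¹ * c x * c y * c z else 0)
      ≤ ∑ x ∈ Icc (k - N) (k + N), 2 * L * ((√(1 + dist x k))⁻¹ * c x) := by
        refine sum_le_sum fun x hx => ?_
        rw [if_pos ((hmem x).1 hx)]
        have hccc : 0 ≤ c x * c y * c z := mul_nonneg (mul_nonneg (hc x) (hc y)) (hc z)
        have := mul_le_mul_of_nonneg_right (trilinear_weight_le (y := y) ((hmem x).1 hx)) hccc
        simp only [L]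
        linarith
    _ = 2 * L * ∑ x ∈ Icc (k - N) (k + N), (√(1 + dist x k))⁻¹ * c x := by rw [mul_sum]
    _ ≤ 2 * L * (m * (4 * √(1 + N))) := by
        gcongr
        exact (sum_Icc_antitoneOn_mul_le hmax hw (by positivity)).trans
          (mul_le_mul_of_nonneg_left (sum_Icc_inv_sqrt_le k N) hm)
    _ = 8 * m * (averagedKernel k y z * c y * c z) := by
        rw [← hN, averagedKernel]
        ring

theorem tsum_ofReal_inv_sqrt_mul_inv_dist_le (k y : ℤ) :
    ∑' z, ENNReal.ofReal ((√(1 + dist y z))⁻¹ * (1 + dist y k + dist z k)⁻¹)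
      ≤ ENNReal.ofReal (192 * (√(1 + dist y k))⁻¹) := by
  calc ∑' z, ENNReal.ofReal ((√(1 + dist y z))⁻¹ * (1 + dist y k + dist z k)⁻¹)
      ≤ ∑' z, ENNReal.ofReal 2
          * ENNReal.ofReal ((√(1 + dist z y))⁻¹ * (1 + dist y k + dist z y)⁻¹) := by
        refine ENNReal.tsum_le_tsum fun z => ?_
        rw [← ENNReal.ofReal_mul zero_le_two, dist_comm y z, mul_left_comm]
        refine ENNReal.ofReal_le_ofReal (mul_le_mul_of_nonneg_left ?_ (by positivity))
        calc (1 + dist y k + dist z k)⁻¹ ≤ ((1 + dist y k + dist z y) / 2)⁻¹ :=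
              inv_anti₀ (by positivity) (by
                linarith [dist_triangle z k y, dist_comm k y, dist_nonneg (x := z) (y := k)])
          _ = 2 * (1 + dist y k + dist z y)⁻¹ := by rw [inv_div, div_eq_mul_inv]
    _ ≤ ENNReal.ofReal 2 * ENNReal.ofReal (96 * (√(1 + dist y k))⁻¹) := by
        rw [ENNReal.tsum_mul_left]
        gcongr
        exact tsum_ofReal_inv_sqrt_mul_inv_le y (by linarith [dist_nonneg (x := y) (y := k)])
    _ = ENNReal.ofReal (192 * (√(1 + dist y k))⁻¹) := by
        rw [← ENNReal.ofReal_mul zero_le_two, ← mul_assoc]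
        norm_num

theorem averagedKernel_mul_inv_sqrt_self (k y z : ℤ) :
    averagedKernel k y z * (√(1 + dist z k))⁻¹
      = (√(1 + dist y z))⁻¹ * (1 + dist y k + dist z k)⁻¹ := by
  rw [averagedKernel, mul_comm, ← mul_assoc, inv_mul_cancel₀ (Real.sqrt_pos.2 (by positivity)).ne',
    one_mul]

theorem averagedKernel_mul_inv_sqrt_le (k y z : ℤ) :
    averagedKernel k y z * (√(1 + dist y k))⁻¹
      ≤ (√(1 + dist z y))⁻¹ * (1 + dist z k + dist y k)⁻¹
        + (√(1 + dist y k))⁻¹ * ((1 + dist z k) + dist y k)⁻¹ := by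
  set a := √(1 + dist y z)
  set b := √(1 + dist y k)
  have ha : 0 < a := Real.sqrt_pos.2 (by positivity)
  have hb : 0 < b := Real.sqrt_pos.2 (by positivity)
  have hab : √(1 + dist z k) ≤ a + b := by
    rw [Real.sqrt_le_left (by positivity)]
    nlinarith [Real.sq_sqrt (by positivity : (0 : ℝ) ≤ 1 + dist y z),
      Real.sq_sqrt (by positivity : (0 : ℝ) ≤ 1 + dist y k), dist_triangle z y k, dist_comm z y]
  have hinv : √(1 + dist z k) * a⁻¹ * b⁻¹ ≤ a⁻¹ + b⁻¹ :=
    calc √(1 + dist z k) * a⁻¹ * b⁻¹ ≤ (a + b) * a⁻¹ * b⁻¹ := by gcongr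
      _ = a⁻¹ + b⁻¹ := by field_simp; ring
  rw [averagedKernel, dist_comm z y, add_right_comm 1 (dist z k)]
  nlinarith [mul_le_mul_of_nonneg_right hinv
    (by positivity : (0 : ℝ) ≤ (1 + dist y k + dist z k)⁻¹)]

theorem tsum_tsum_ofReal_averagedKernel_le {c : ℤ → ℝ} (hc : ∀ l, 0 ≤ c l) (k : ℤ) :
    ∑' y, ∑' z, ENNReal.ofReal (averagedKernel k y z * c y * c z)
      ≤ ENNReal.ofReal 480 * ∑' l, ENNReal.ofReal (c l ^ 2) := by
  have hrow : ∀ y, ∑' z, ENNReal.ofReal (averagedKernel k y z * (√(1 + dist z k))⁻¹)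
      ≤ ENNReal.ofReal (192 * (√(1 + dist y k))⁻¹) := fun y => by
    simp_rw [averagedKernel_mul_inv_sqrt_self]
    exact tsum_ofReal_inv_sqrt_mul_inv_dist_le k y
  have hcol : ∀ z, ∑' y, ENNReal.ofReal (averagedKernel k y z * (√(1 + dist y k))⁻¹)
      ≤ ENNReal.ofReal ((192 + 96) * (√(1 + dist z k))⁻¹) := fun z => by
    rw [add_mul, ENNReal.ofReal_add (by positivity) (by positivity)]
    calc ∑' y, ENNReal.ofReal (averagedKernel k y z * (√(1 + dist y k))⁻¹)
        ≤ ∑' y, (ENNReal.ofReal ((√(1 + dist z y))⁻¹ * (1 + dist z k + dist y k)⁻¹)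
          + ENNReal.ofReal ((√(1 + dist y k))⁻¹ * ((1 + dist z k) + dist y k)⁻¹)) :=
          ENNReal.tsum_le_tsum fun y =>
            (ENNReal.ofReal_le_ofReal (averagedKernel_mul_inv_sqrt_le k y z)).trans
              ENNReal.ofReal_add_le
      _ ≤ _ := by
        rw [ENNReal.tsum_add]
        exact add_le_add (tsum_ofReal_inv_sqrt_mul_inv_dist_le k z)
          (tsum_ofReal_inv_sqrt_mul_inv_le k (by linarith [dist_nonneg (x := z) (y := k)]))
  have hK : ∀ y z, 0 ≤ averagedKernel k y z := fun y z => by unfold averagedKernel; positivity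
  have := tsum_tsum_ofReal_mul_le_of_schur hK (fun u => inv_pos.2 (Real.sqrt_pos.2 (by positivity)))
    hc hrow hcol
  rwa [← ENNReal.ofReal_add (by norm_num) (by norm_num),
    show (192 : ℝ) + (192 + 96) = 480 by norm_num] at this

theorem tsum_ofReal_trilinear_le {A : ℝ} (hA : 0 ≤ A) {c : ℤ → ℝ} (hc : ∀ l, 0 ≤ c l) {k : ℤ}
    (hmax : ∀ j : ℕ, ∑ l ∈ Icc (k - j) (k + j), c l ≤ (2 * j + 1) * (A * c k)) :
    ∑' p : ℤ × ℤ × ℤ, ENNReal.ofReal ((1 + |δhiZ k p.1 p.2.1 p.2.2|)⁻¹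
        * (1 + |δmedZ k p.1 p.2.1 p.2.2|)⁻¹ * c p.1 * c p.2.1 * c p.2.2)
      ≤ ENNReal.ofReal (7680 * A * c k) * ∑' l, ENNReal.ofReal (c l ^ 2) := by
  simp_rw [inv_one_add_abs_δhiZ_mul_δmedZ]
  set F : ℤ → ℤ → ℤ → ℝ := fun x y z =>
    ((1 + dist k x + dist y z) * (1 + dist k z + dist y x))⁻¹ * c x * c y * c z
  set G : ℤ × ℤ × ℤ → ENNReal := fun p =>
    ENNReal.ofReal (if dist p.1 k ≤ dist p.2.2 k then F p.1 p.2.1 p.2.2 else 0)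
  let σ : ℤ × ℤ × ℤ ≃ ℤ × ℤ × ℤ :=
    ⟨fun p => (p.2.2, p.2.1, p.1), fun p => (p.2.2, p.2.1, p.1), fun _ => rfl, fun _ => rfl⟩
  have hsymm : ∀ p : ℤ × ℤ × ℤ, ENNReal.ofReal (F p.1 p.2.1 p.2.2) ≤ G p + G (σ p) := by
    rintro ⟨x, y, z⟩
    by_cases hxz : dist x k ≤ dist z k
    · simp [G, hxz]
    · have hFswap : F z y x = F x y z := by simp only [F]; ring
      simp [G, σ, le_of_not_ge hxz, hFswap]
  have hm : 0 ≤ A * c k := mul_nonneg hA (hc k)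
  have hconst : ENNReal.ofReal (7680 * A * c k)
      = 2 * (ENNReal.ofReal (8 * (A * c k)) * ENNReal.ofReal 480) := by
    rw [← ENNReal.ofReal_mul (by positivity), show (2 : ENNReal) = ENNReal.ofReal 2 by simp,
      ← ENNReal.ofReal_mul zero_le_two]
    ring_nf
  calc ∑' p : ℤ × ℤ × ℤ, ENNReal.ofReal (F p.1 p.2.1 p.2.2)
      ≤ ∑' p, (G p + G (σ p)) := ENNReal.tsum_le_tsum hsymm
    _ = 2 * ∑' y, ∑' z, ∑' x, G (x, y, z) := by
        rw [ENNReal.tsum_add, σ.tsum_eq G, ← two_mul, ENNReal.tsum_prod', ENNReal.tsum_comm,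
          ENNReal.tsum_prod']
    _ ≤ 2 * ∑' y, ∑' z,
          ENNReal.ofReal (8 * (A * c k)) * ENNReal.ofReal (averagedKernel k y z * c y * c z) := by
        gcongr with y z
        rw [← ENNReal.ofReal_mul (by positivity)]
        exact tsum_ofReal_ite_trilinear_le hc hm hmax y z
    _ ≤ 2 * (ENNReal.ofReal (8 * (A * c k))
          * (ENNReal.ofReal 480 * ∑' l, ENNReal.ofReal (c l ^ 2))) := by
        simp_rw [ENNReal.tsum_mul_left]
        gcongr
        exact tsum_tsum_ofReal_averagedKernel_le hc k
    _ = ENNReal.ofReal (7680 * A * c k) * ∑' l, ENNReal.ofReal (c l ^ 2) := by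
        rw [hconst]
        ring

theorem trilinear_envelope_sum_bound :
    ∀ A : ℝ, 1 ≤ A → ∃ C : ℝ,
      ∀ c : ℤ → ℝ, (∀ k, 0 ≤ c k) → Summable (fun k => (c k) ^ 2) →
        (∀ (k : ℤ) (j : ℕ),
          (2 * (j : ℝ) + 1)⁻¹ * ∑ l ∈ Finset.Icc (k - (j : ℤ)) (k + (j : ℤ)), c l
            ≤ A * c k) →
        ∀ k1 : ℤ,
          Summable (fun p : ℤ × ℤ × ℤ =>
            (1 + |δhiZ k1 p.1 p.2.1 p.2.2|)⁻¹ * (1 + |δmedZ k1 p.1 p.2.1 p.2.2|)⁻¹ *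
              c p.1 * c p.2.1 * c p.2.2) ∧
          (∑' p : ℤ × ℤ × ℤ,
            (1 + |δhiZ k1 p.1 p.2.1 p.2.2|)⁻¹ * (1 + |δmedZ k1 p.1 p.2.1 p.2.2|)⁻¹ *
              c p.1 * c p.2.1 * c p.2.2)
            ≤ C * (∑' k : ℤ, (c k) ^ 2) * c k1 := by
  intro A hA
  refine ⟨7680 * A, fun c hc hsq hmax k => ?_⟩
  have hbound := tsum_ofReal_trilinear_le (by linarith) hc fun j =>
    (inv_mul_le_iff₀ (by positivity)).1 (hmax k j)
  rw [← ENNReal.ofReal_tsum_of_nonneg (fun l => sq_nonneg (c l)) hsq,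
    ← ENNReal.ofReal_mul (mul_nonneg (by linarith) (hc k))] at hbound
  refine (summable_and_tsum_le_of_tsum_ofReal_le (fun p => ?_)
    (mul_nonneg (mul_nonneg (by linarith) (hc k)) (tsum_nonneg fun l => sq_nonneg (c l)))
    hbound).imp_right fun h => h.trans_eq (by ring)
  exact mul_nonneg (mul_nonneg (mul_nonneg (by positivity) (hc _)) (hc _)) (hc _)
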